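/- arXiv:1806.03320 — 5 statements merged into one kernel-verified Lean document; each statement's English description precedes it below -/
import Mathlib

section
/- For every m ≥ 2 and every surjective colouring Δ : ℕ^(2) → [m], the value 2 belongs to F_Δ, i.e., there exists an infinite subset X ⊆ ℕ on whose edges exactly 2 colours appear. -/
/-- The set of colours appearing on edges inside `X` under the edge-colouring `Δ`
of the complete graph on `ℕ`. -/
def colorsOn {C : Type*} (Δ : ℕ → ℕ → C) (X : Set ℕ) : Set C :=
  {c | ∃ x ∈ X, ∃ y ∈ X, x ≠ y ∧ Δ x y = c}

/-- `F_Δ`: the set of values `γ(X)` (number of colours inside `X`)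
over infinite `X ⊆ ℕ`. -/
def FDelta {C : Type*} (Δ : ℕ → ℕ → C) : Set ℕ :=
  {k | ∃ X : Set ℕ, X.Infinite ∧ (colorsOn Δ X).ncard = k}

namespace Stmt1Aux


lemma pigeon {m : ℕ} (f : ℕ → Fin m) {S : Set ℕ} (hS : S.Infinite) :
    ∃ c, {x | x ∈ S ∧ f x = c}.Infinite := by
  by_contra h
  push_neg at h
  exact hS ((Set.finite_iUnion h).subset
    (fun x hx => Set.mem_iUnion.2 ⟨f x, hx, rfl⟩))

lemma step_ex {m : ℕ} (Δ : ℕ → ℕ → Fin m) (a : ℕ) (S : Set ℕ) (hS : S.Infinite) :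
    ∃ (b : ℕ) (T : Set ℕ) (c : Fin m),
      T.Infinite ∧ b ∈ T ∧ T ⊆ S ∧ a ∉ T ∧ ∀ x ∈ T, Δ a x = c := by
  obtain ⟨c, hc⟩ := pigeon (Δ a) (hS.diff (Set.finite_singleton a))
  obtain ⟨b, hb⟩ := hc.nonempty
  exact ⟨b, _, c, hc, hb, fun x hx => hx.1.1, fun h => h.1.2 rfl,
    fun x hx => hx.2⟩

/-- Infinite Ramsey theorem for pairs. -/
lemma ramsey {m : ℕ} (hm : 0 < m) (Δ : ℕ → ℕ → Fin m)
    (hsym : ∀ x y, Δ x y = Δ y x) :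
    ∃ (X : Set ℕ) (c : Fin m), X.Infinite ∧
      ∀ x ∈ X, ∀ y ∈ X, x ≠ y → Δ x y = c := by
  classical
  set Q := {p : ℕ × Set ℕ × Fin m // p.2.1.Infinite ∧ p.1 ∈ p.2.1} with hQ
  have stepF : ∀ q : Q, ∃ r : Q,
      r.1.2.1 ⊆ q.1.2.1 ∧ q.1.1 ∉ r.1.2.1 ∧
        ∀ x ∈ r.1.2.1, Δ q.1.1 x = r.1.2.2 := by
    rintro ⟨⟨a, S, c⟩, hS, ha⟩
    obtain ⟨b, T, c', hT, hb, hTS, haT, hcol⟩ := step_ex Δ a S hS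
    exact ⟨⟨⟨b, T, c'⟩, hT, hb⟩, hTS, haT, hcol⟩
  choose F hF1 hF2 hF3 using stepF
  set q0 : Q := ⟨⟨0, Set.univ, ⟨0, hm⟩⟩, Set.infinite_univ, Set.mem_univ 0⟩
  set P : ℕ → Q := fun n => F^[n] q0 with hP
  have hPsucc : ∀ n, P (n+1) = F (P n) := fun n =>
    Function.iterate_succ_apply' F n q0
  set a : ℕ → ℕ := fun n => (P n).1.1
  set S : ℕ → Set ℕ := fun n => (P n).1.2.1
  set col : ℕ → Fin m := fun n => (P (n+1)).1.2.2
  have hsub : ∀ n, S (n+1) ⊆ S n := fun n => by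
    simpa only [S, hPsucc n] using hF1 (P n)
  have hnot : ∀ n, a n ∉ S (n+1) := fun n => by
    simpa only [S, a, hPsucc n] using hF2 (P n)
  have hcol : ∀ n, ∀ x ∈ S (n+1), Δ (a n) x = col n := fun n => by
    simpa only [S, a, col, hPsucc n] using hF3 (P n)
  have hmem : ∀ n, a n ∈ S n := fun n => (P n).2.2
  -- for i < j, a j ∈ S (i+1)
  have hchain : ∀ i j, i < j → a j ∈ S (i+1) := by
    intro i j hij
    have : ∀ k, S (i + 1 + k) ⊆ S (i+1) := by
      intro k
      induction k with
      | zero => exact subset_rfl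
      | succ k ih => exact (hsub _).trans ih
    obtain ⟨k, rfl⟩ := Nat.exists_eq_add_of_lt hij
    have e : i + k + 1 = i + 1 + k := by omega
    rw [e]
    exact this k (hmem _)
  have hane : ∀ i j, i < j → a i ≠ a j := by
    intro i j hij h
    exact hnot i (h ▸ hchain i j hij)
  have hmono : ∀ i j, i < j → Δ (a i) (a j) = col i :=
    fun i j hij => hcol i (a j) (hchain i j hij)
  -- pigeonhole on colours
  obtain ⟨c, hc⟩ := pigeon col Set.infinite_univ
  refine ⟨a '' {n | n ∈ Set.univ ∧ col n = c}, c,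
    hc.image (fun i _ j _ h => ?_), ?_⟩
  · by_contra hne
    rcases Nat.lt_or_ge i j with h' | h'
    · exact hane i j h' h
    · exact hane j i (lt_of_le_of_ne h' (Ne.symm hne)) h.symm
  · rintro x ⟨i, ⟨-, hi⟩, rfl⟩ y ⟨j, ⟨-, hj⟩, rfl⟩ hxy
    rcases Nat.lt_or_ge i j with h' | h'
    · rw [hmono i j h', hi]
    · have : j < i := lt_of_le_of_ne h' (fun h => hxy (h ▸ rfl))
      rw [hsym, hmono j i this, hj]


lemma helper {m : ℕ} (Δ : ℕ → ℕ → Fin m) {Y : Set ℕ} {c1 c2 : Fin m}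
    (hne : c1 ≠ c2) (hsub : colorsOn Δ Y ⊆ {c1, c2})
    (h1 : c1 ∈ colorsOn Δ Y) (h2 : c2 ∈ colorsOn Δ Y) (hInf : Y.Infinite) :
    2 ∈ FDelta Δ := by
  refine ⟨Y, hInf, ?_⟩
  have : colorsOn Δ Y = {c1, c2} :=
    Set.Subset.antisymm hsub (Set.insert_subset h1 (Set.singleton_subset_iff.2 h2))
  rw [this, Set.ncard_pair hne]

end Stmt1Aux

/-- For every `m ≥ 2` and every surjective colouring `Δ : ℕ^(2) → [m]`,
the value `2` belongs to `F_Δ`. -/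
theorem stmt1 {m : ℕ} (hm : 2 ≤ m) (Δ : ℕ → ℕ → Fin m)
    (hsym : ∀ x y, Δ x y = Δ y x)
    (hsurj : ∀ c : Fin m, ∃ x y : ℕ, x ≠ y ∧ Δ x y = c) :
    2 ∈ FDelta Δ := by
  obtain ⟨X, c, hX, hXc⟩ := Stmt1Aux.ramsey (by omega) Δ hsym
  obtain ⟨c', hc'⟩ : ∃ c' : Fin m, c' ≠ c :=
    Fintype.exists_ne_of_one_lt_card (by simp; omega) c
  obtain ⟨A, B, hAB, hΔAB⟩ := hsurj c'
  have hS0 : (X \ {A, B}).Infinite := hX.diff (Set.toFinite _)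
  obtain ⟨d, hd⟩ := Stmt1Aux.pigeon (Δ A) hS0
  obtain ⟨e, he⟩ := Stmt1Aux.pigeon (Δ B) hd
  set X₂ : Set ℕ := {x | x ∈ {x | x ∈ X \ {A, B} ∧ Δ A x = d} ∧ Δ B x = e} with hX₂def
  have hmem : ∀ x ∈ X₂, x ∈ X ∧ x ≠ A ∧ x ≠ B ∧ Δ A x = d ∧ Δ B x = e := by
    rintro x ⟨⟨⟨hx, hab⟩, hda⟩, hdb⟩
    simp only [Set.mem_insert_iff, Set.mem_singleton_iff, not_or] at hab
    exact ⟨hx, hab.1, hab.2, hda, hdb⟩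
  -- two distinct elements of X₂, giving colour c
  obtain ⟨x₀, hx₀⟩ := he.nonempty
  obtain ⟨x₁, hx₁, hx₁0⟩ : ∃ x₁ ∈ X₂, x₁ ≠ x₀ := by
    obtain ⟨x₁, hx₁⟩ := (he.diff (Set.finite_singleton x₀)).nonempty
    exact ⟨x₁, hx₁.1, by simpa using hx₁.2⟩
  have hcmem : ∀ Y : Set ℕ, X₂ ⊆ Y → c ∈ colorsOn Δ Y := fun Y hY =>
    ⟨x₁, hY hx₁, x₀, hY hx₀, hx₁0,
      hXc _ (hmem _ hx₁).1 _ (hmem _ hx₀).1 hx₁0⟩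
  by_cases hdc : d = c
  · by_cases hec : e = c
    · -- Y = insert A (insert B X₂), colours {c, c'}
      refine Stmt1Aux.helper Δ (Ne.symm hc') ?_ (hcmem _ (fun x hx =>
        Set.mem_insert_of_mem _ (Set.mem_insert_of_mem _ hx)))
        ⟨A, Set.mem_insert _ _, B, Set.mem_insert_of_mem _ (Set.mem_insert _ _),
          hAB, hΔAB⟩
        (he.mono (fun x hx => Set.mem_insert_of_mem _ (Set.mem_insert_of_mem _ hx)))
      rintro k ⟨x, hx, y, hy, hxy, rfl⟩
      simp only [Set.mem_insert_iff] at hx hy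
      rcases hx with rfl | rfl | hx <;> rcases hy with rfl | rfl | hy
      · exact absurd rfl hxy
      · exact Or.inr (Set.mem_singleton_iff.2 hΔAB)
      · exact Or.inl (by rw [(hmem _ hy).2.2.2.1, hdc])
      · exact Or.inr (Set.mem_singleton_iff.2 (by rw [hsym]; exact hΔAB))
      · exact absurd rfl hxy
      · exact Or.inl (by rw [(hmem _ hy).2.2.2.2, hec])
      · exact Or.inl (by rw [hsym, (hmem _ hx).2.2.2.1, hdc])
      · exact Or.inl (by rw [hsym, (hmem _ hx).2.2.2.2, hec])
      · exact Or.inl (hXc _ (hmem _ hx).1 _ (hmem _ hy).1 hxy)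
    · -- Y = insert B X₂, colours {c, e}
      refine Stmt1Aux.helper Δ (Ne.symm hec) ?_
        (hcmem _ (fun x hx => Set.mem_insert_of_mem _ hx))
        ⟨B, Set.mem_insert _ _, x₀, Set.mem_insert_of_mem _ hx₀,
          Ne.symm (hmem _ hx₀).2.2.1, (hmem _ hx₀).2.2.2.2⟩
        (he.mono (fun x hx => Set.mem_insert_of_mem _ hx))
      rintro k ⟨x, hx, y, hy, hxy, rfl⟩
      simp only [Set.mem_insert_iff] at hx hy
      rcases hx with rfl | hx <;> rcases hy with rfl | hy
      · exact absurd rfl hxy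
      · exact Or.inr (Set.mem_singleton_iff.2 (hmem _ hy).2.2.2.2)
      · exact Or.inr (Set.mem_singleton_iff.2 (by rw [hsym]; exact (hmem _ hx).2.2.2.2))
      · exact Or.inl (hXc _ (hmem _ hx).1 _ (hmem _ hy).1 hxy)
  · -- Y = insert A X₂, colours {c, d}
    refine Stmt1Aux.helper Δ (Ne.symm hdc) ?_
      (hcmem _ (fun x hx => Set.mem_insert_of_mem _ hx))
      ⟨A, Set.mem_insert _ _, x₀, Set.mem_insert_of_mem _ hx₀,
        Ne.symm (hmem _ hx₀).2.1, (hmem _ hx₀).2.2.2.1⟩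
      (he.mono (fun x hx => Set.mem_insert_of_mem _ hx))
    rintro k ⟨x, hx, y, hy, hxy, rfl⟩
    simp only [Set.mem_insert_iff] at hx hy
    rcases hx with rfl | hx <;> rcases hy with rfl | hy
    · exact absurd rfl hxy
    · exact Or.inr (Set.mem_singleton_iff.2 (hmem _ hy).2.2.2.1)
    · exact Or.inr (Set.mem_singleton_iff.2 (by rw [hsym]; exact (hmem _ hx).2.2.2.1))
    · exact Or.inl (hXc _ (hmem _ hx).1 _ (hmem _ hy).1 hxy)
end

section
/- Let m ≥ 2 and let Δ : ℕ^(2) → [m] be a surjective colouring. Then there exist an infinite set X' ⊆ ℕ and a finite set X ⊆ ℕ \ X' such that (1) all edges inside X' have the same colour, (2) for every x ∈ X all edges from x to X' have the same colour, and (3) all m colours appear on edges inside X ∪ X'. -/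
theorem Set.Infinite.exists_infinite_fiber {α β : Type*} [Finite β] {s : Set α}
    (hs : s.Infinite) (f : α → β) : ∃ b, {a ∈ s | f a = b}.Infinite := by
  by_contra! h
  refine hs ((Set.finite_iUnion h).subset fun a ha => ?_)
  exact Set.mem_iUnion.2 ⟨f a, ha, rfl⟩

section Ramsey

variable {C : Type*} [Finite C] (Δ : ℕ → ℕ → C)

theorem exists_infinite_subset_colour_const_from_sInf {S : Set ℕ} (hS : S.Infinite) :
    ∃ T ⊆ S, T.Infinite ∧ (∀ y ∈ T, sInf S < y) ∧ ∃ c, ∀ y ∈ T, Δ (sInf S) y = c := by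
  obtain ⟨c, hc⟩ := (hS.sdiff (Set.finite_Iic (sInf S))).exists_infinite_fiber (Δ (sInf S))
  exact ⟨_, fun y hy => hy.1.1, hc, fun y hy => not_le.1 hy.1.2, c, fun y hy => hy.2⟩

theorem exists_strictMono_colour_eq_of_lt :
    ∃ (x : ℕ → ℕ) (col : ℕ → C), StrictMono x ∧ ∀ i j, i < j → Δ (x i) (x j) = col i := by
  choose T hTS hT hTgt c hTc using
    fun S : Set ℕ => exists_infinite_subset_colour_const_from_sInf Δ (S := S)
  let S : ℕ → {S : Set ℕ // S.Infinite} :=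
    fun n => Nat.rec ⟨Set.univ, Set.infinite_univ⟩ (fun _ p => ⟨T p.1 p.2, hT p.1 p.2⟩) n
  have hS_succ (n : ℕ) : (S (n + 1)).1 = T (S n).1 (S n).2 := rfl
  have hS_anti : Antitone fun n => (S n).1 :=
    antitone_nat_of_succ_le fun n => hS_succ n ▸ hTS _ _
  let x n := sInf (S n).1
  have hx_mem (n : ℕ) : x n ∈ (S n).1 := Nat.sInf_mem (S n).2.nonempty
  have hx_later {i j : ℕ} (hij : i < j) : x j ∈ T (S i).1 (S i).2 :=
    hS_succ i ▸ hS_anti hij (hx_mem j)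
  refine ⟨x, fun n => c (S n).1 (S n).2,
    strictMono_nat_of_lt_succ fun n => hTgt _ _ _ (hx_later n.lt_succ_self),
    fun i j hij => hTc _ _ _ (hx_later hij)⟩

theorem exists_infinite_monochromatic_of_lt :
    ∃ Y : Set ℕ, Y.Infinite ∧ ∃ c, ∀ x ∈ Y, ∀ y ∈ Y, x < y → Δ x y = c := by
  obtain ⟨x, col, hx, hcol⟩ := exists_strictMono_colour_eq_of_lt Δ
  obtain ⟨c, hc⟩ := Set.infinite_univ.exists_infinite_fiber col
  refine ⟨x '' _, hc.image hx.injective.injOn, c, ?_⟩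
  rintro _ ⟨i, hi, rfl⟩ _ ⟨j, hj, rfl⟩ hij
  exact (hcol i j (hx.lt_iff_lt.1 hij)).trans hi.2

theorem exists_infinite_monochromatic (hsym : ∀ x y, Δ x y = Δ y x) :
    ∃ Y : Set ℕ, Y.Infinite ∧ ∃ c, ∀ x ∈ Y, ∀ y ∈ Y, x ≠ y → Δ x y = c := by
  obtain ⟨Y, hY, c, hc⟩ := exists_infinite_monochromatic_of_lt Δ
  refine ⟨Y, hY, c, fun x hx y hy hxy => ?_⟩
  rcases hxy.lt_or_gt with h | h
  · exact hc x hx y hy h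
  · exact (hsym x y).trans (hc y hy x hx h)

end Ramsey

theorem exists_infinite_subset_colour_const_from_finite {α C : Type*} [Finite C]
    (Δ : α → α → C) {X Y : Set α} (hX : X.Finite) (hY : Y.Infinite) :
    ∃ X' ⊆ Y \ X, X'.Infinite ∧ ∀ x ∈ X, ∃ c, ∀ y ∈ X', Δ x y = c := by
  have := hX.to_subtype
  obtain ⟨g, hg⟩ := (hY.sdiff hX).exists_infinite_fiber fun y (x : X) => Δ x y
  exact ⟨_, fun y hy => hy.1, hg, fun x hx => ⟨g ⟨x, hx⟩, fun y hy => congrFun hy.2 ⟨x, hx⟩⟩⟩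

theorem stmt3_general {m : ℕ} (Δ : ℕ → ℕ → Fin m)
    (hsym : ∀ x y, Δ x y = Δ y x)
    (hsurj : ∀ c : Fin m, ∃ x y : ℕ, x ≠ y ∧ Δ x y = c) :
    ∃ X' X : Set ℕ, X'.Infinite ∧ X.Finite ∧ X ⊆ Set.univ \ X' ∧
      (∃ c : Fin m, ∀ x ∈ X', ∀ y ∈ X', x ≠ y → Δ x y = c) ∧
      (∀ x ∈ X, ∃ c : Fin m, ∀ y ∈ X', Δ x y = c) ∧
      colorsOn Δ (X ∪ X') = Set.univ := by
  obtain ⟨Y, hY, c, hYc⟩ := exists_infinite_monochromatic Δ hsym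
  choose a b hab hΔab using hsurj
  have hX : (Set.range a ∪ Set.range b).Finite := (Set.finite_range a).union (Set.finite_range b)
  obtain ⟨X', hX'Y, hX', hconst⟩ := exists_infinite_subset_colour_const_from_finite Δ hX hY
  refine ⟨X', _, hX', hX, fun x hx => ⟨trivial, fun hx' => (hX'Y hx').2 hx⟩,
    ⟨c, fun x hx y hy => hYc x (hX'Y hx).1 y (hX'Y hy).1⟩, hconst, ?_⟩
  exact Set.eq_univ_of_forall fun k =>
    ⟨a k, .inl (.inl ⟨k, rfl⟩), b k, .inl (.inr ⟨k, rfl⟩), hab k, hΔab k⟩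

/-- There are an infinite `X'` and a finite `X ⊆ ℕ \ X'` such that `X'` is
monochromatic, every vertex of `X` sends a single colour to `X'`, and all `m`
colours appear inside `X ∪ X'`. -/
theorem stmt3 {m : ℕ} (hm : 2 ≤ m) (Δ : ℕ → ℕ → Fin m)
    (hsym : ∀ x y, Δ x y = Δ y x)
    (hsurj : ∀ c : Fin m, ∃ x y : ℕ, x ≠ y ∧ Δ x y = c) :
    ∃ X' X : Set ℕ, X'.Infinite ∧ X.Finite ∧ X ⊆ Set.univ \ X' ∧
      (∃ c : Fin m, ∀ x ∈ X', ∀ y ∈ X', x ≠ y → Δ x y = c) ∧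
      (∀ x ∈ X, ∃ c : Fin m, ∀ y ∈ X', Δ x y = c) ∧
      colorsOn Δ (X ∪ X') = Set.univ :=
  stmt3_general Δ hsym hsurj
end

section
/- For every m ≥ 2 and every surjective colouring Δ : ℕ^(2) → [m], F_Δ has at least ⌊√(2m)⌋ elements. -/
open Set Filter

theorem Finset.card_lt_card_image_powerset_of_strictMonoOn {α β : Type*} [DecidableEq α]
    [DecidableEq β] [Preorder β] {f : Finset α → β} (s : Finset α)
    (hf : StrictMonoOn f (Set.Iic s)) : s.card < (s.powerset.image f).card := by
  induction s using Finset.induction_on with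
  | empty => simp
  | insert c s hc ih =>
    have hs : s ⊆ insert c s := Finset.subset_insert c s
    have htop : f (insert c s) ∉ s.powerset.image f := by
      simp only [Finset.mem_image, Finset.mem_powerset, not_exists, not_and]
      intro T hT
      exact (hf (hT.trans hs) self_mem_Iic (hT.trans_ssubset (Finset.ssubset_insert hc))).ne
    calc (insert c s).card = s.card + 1 := Finset.card_insert_of_notMem hc
      _ < (insert (f (insert c s)) (s.powerset.image f)).card := by
        rw [Finset.card_insert_of_notMem htop]
        exact Nat.succ_lt_succ (ih (hf.mono (Set.Iic_subset_Iic.2 hs)))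
      _ ≤ ((insert c s).powerset.image f).card := by
        refine Finset.card_le_card (Finset.insert_subset ?_ ?_)
        · exact Finset.mem_image_of_mem f (Finset.mem_powerset_self _)
        · exact Finset.image_subset_image (Finset.powerset_mono.2 hs)

theorem Finset.card_lt_ncard_of_strictMonoOn {α β : Type*} [DecidableEq α] [Preorder β]
    {f : Finset α → β} {s : Finset α} (hf : StrictMonoOn f (Set.Iic s)) {P : Set β}
    (hP : P.Finite) (hfP : ∀ T ⊆ s, f T ∈ P) : s.card < P.ncard := by
  classical
  refine (s.card_lt_card_image_powerset_of_strictMonoOn hf).trans_le ?_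
  rw [← ncard_coe_finset]
  refine ncard_le_ncard (fun b hb => ?_) hP
  obtain ⟨T, hT, rfl⟩ := Finset.mem_image.1 hb
  exact hfP T (Finset.mem_powerset.1 hT)

theorem Set.Infinite.exists_infinite_inter_preimage_singleton {α β : Type*} [Finite β]
    {s : Set α} (hs : s.Infinite) (f : α → β) : ∃ b, (s ∩ f ⁻¹' {b}).Infinite := by
  by_contra! h
  exact hs ((finite_iUnion h).subset fun x hx => mem_iUnion.2 ⟨f x, hx, rfl⟩)

theorem le_choose_ncard_inter_Iic_add_one {P : Set ℕ}
    (hP : ∀ k ∈ P, 2 ≤ k → ∃ k' ∈ P, k' < k ∧ k < k' + (P ∩ Iic k).ncard) :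
    ∀ k ∈ P, k ≤ (P ∩ Iic k).ncard.choose 2 + 1 := by
  intro k hk
  induction k using Nat.strong_induction_on with
  | _ k ih =>
    rcases Nat.lt_or_ge k 2 with hk2 | hk2
    · omega
    obtain ⟨k', hk'P, hk'k, hgap⟩ := hP k hk hk2
    have hlt : (P ∩ Iic k').ncard < (P ∩ Iic k).ncard := by
      refine ncard_lt_ncard ⟨inter_subset_inter_right P (Iic_subset_Iic.2 hk'k.le), ?_⟩
        ((finite_Iic k).subset inter_subset_right)
      exact not_subset.2 ⟨k, ⟨hk, self_mem_Iic⟩, fun h => hk'k.not_ge h.2⟩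
    obtain ⟨t, ht⟩ := Nat.exists_eq_add_one.2 (Nat.zero_lt_of_lt hlt)
    have hchoose : (P ∩ Iic k').ncard.choose 2 ≤ t.choose 2 := Nat.choose_le_choose 2 (by omega)
    have hpascal : (t + 1).choose 2 = t + t.choose 2 := by
      rw [Nat.choose_succ_succ', Nat.choose_one_right]
    have := ih k' hk'k hk'P
    rw [ht] at hgap ⊢
    omega

section Colourings

variable {C : Type*} {Δ : ℕ → ℕ → C}

theorem colorsOn_mono {X Y : Set ℕ} (h : X ⊆ Y) : colorsOn Δ X ⊆ colorsOn Δ Y := by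
  rintro c ⟨x, hx, y, hy, hxy, rfl⟩
  exact ⟨x, h hx, y, h hy, hxy, rfl⟩

theorem Set.Infinite.colorsOn_nonempty {X : Set ℕ} (hX : X.Infinite) :
    (colorsOn Δ X).Nonempty := by
  obtain ⟨x, hx⟩ := hX.nonempty
  obtain ⟨y, hy, hyx⟩ := hX.exists_notMem_finset {x}
  exact ⟨Δ x y, x, hx, y, hy, fun h => hyx (by simp [h]), rfl⟩

theorem colorsOn_insert (hsym : ∀ x y, Δ x y = Δ y x) (u : ℕ) (Z : Set ℕ) :
    colorsOn Δ (insert u Z) = colorsOn Δ Z ∪ Δ u '' (Z \ {u}) := by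
  ext c
  constructor
  · rintro ⟨x, rfl | hx, y, rfl | hy, hxy, rfl⟩
    · exact absurd rfl hxy
    · exact Or.inr ⟨y, ⟨hy, hxy.symm⟩, rfl⟩
    · exact Or.inr ⟨x, ⟨hx, hxy⟩, hsym _ _⟩
    · exact Or.inl ⟨x, hx, y, hy, hxy, rfl⟩
  · rintro (hc | ⟨y, ⟨hy, hyu⟩, rfl⟩)
    · exact colorsOn_mono (subset_insert u Z) hc
    · exact ⟨u, mem_insert u Z, y, mem_insert_of_mem u hy, Ne.symm hyu, rfl⟩

theorem exists_infinite_subset_colorsOn_subsingleton [Finite C]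
    (hsym : ∀ x y, Δ x y = Δ y x) {X : Set ℕ} (hX : X.Infinite) :
    ∃ Y ⊆ X, Y.Infinite ∧ (colorsOn Δ Y).Subsingleton := by
  have := hX.cofinite_inf_principal_neBot
  set U := Ultrafilter.of (cofinite ⊓ 𝓟 X)
  have hUX : ∀ᶠ x in (U : Filter ℕ), x ∈ X :=
    Ultrafilter.of_le _ (mem_inf_of_right (mem_principal_self X))
  have hUne : ∀ x, ∀ᶠ y in (U : Filter ℕ), y ≠ x := fun x =>
    Ultrafilter.of_le _ (mem_inf_of_left (finite_singleton x).compl_mem_cofinite)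
  -- `κ x` is the colour of `U`-almost every edge at `x`
  choose κ hκ using fun x => U.eventually_exists_iff (P := fun c y => Δ x y = c) |>.mp
    (Eventually.of_forall fun y => ⟨Δ x y, rfl⟩)
  obtain ⟨c, hc⟩ := U.eventually_exists_iff (P := fun c x => κ x = c) |>.mp
    (Eventually.of_forall fun x => ⟨κ x, rfl⟩)
  obtain ⟨f, hfX, hf⟩ := exists_seq_of_forall_finset_exists (fun x => x ∈ X ∧ κ x = c)
    (fun x y => y ≠ x ∧ Δ x y = c) fun s hs =>
      ((hUX.and hc).and ((eventually_all_finset s).2 fun x hx =>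
        (hUne x).and ((hκ x).mono fun y hy => hy.trans (hs x hx).2))).exists
  have hinj : f.Injective := Function.Injective.of_lt_imp_ne fun i j h => (hf i j h).1.symm
  refine ⟨range f, range_subset_iff.2 fun n => (hfX n).1, infinite_range_of_injective hinj,
    (subsingleton_singleton (a := c)).anti ?_⟩
  rintro _ ⟨_, ⟨i, rfl⟩, _, ⟨j, rfl⟩, hne, rfl⟩
  rcases lt_or_gt_of_ne (ne_of_apply_ne f hne) with h | h
  · exact (hf i j h).2
  · exact (hsym _ _).trans (hf j i h).2

theorem one_mem_FDelta [Finite C] (hsym : ∀ x y, Δ x y = Δ y x) : 1 ∈ FDelta Δ := by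
  obtain ⟨Y, -, hY, hsub⟩ := exists_infinite_subset_colorsOn_subsingleton hsym infinite_univ
  obtain ⟨c, hc⟩ := hY.colorsOn_nonempty (Δ := Δ)
  exact ⟨Y, hY, by rw [hsub.eq_singleton_of_mem hc, ncard_singleton]⟩

theorem exists_subset_colorsOn_eq_or_eq [Finite C] (hsym : ∀ x y, Δ x y = Δ y x)
    {X : Set ℕ} (hX : X.Infinite) (hX1 : 1 < (colorsOn Δ X).ncard) :
    ∃ Y ⊆ X, Y.Infinite ∧ (colorsOn Δ Y).ncard < (colorsOn Δ X).ncard ∧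
      ∀ Z, Y ⊆ Z → Z ⊆ X → colorsOn Δ Z = colorsOn Δ Y ∨ colorsOn Δ Z = colorsOn Δ X := by
  set S := {Y | Y ⊆ X ∧ Y.Infinite ∧ (colorsOn Δ Y).ncard < (colorsOn Δ X).ncard}
  have hS : S.Nonempty := by
    obtain ⟨Y, hYX, hY, hsub⟩ := exists_infinite_subset_colorsOn_subsingleton hsym hX
    exact ⟨Y, hYX, hY, (ncard_le_one_iff_subsingleton.2 hsub).trans_lt hX1⟩
  have hfin : ((fun Y => (colorsOn Δ Y).ncard) '' S).Finite :=
    (finite_Iio _).subset (by rintro _ ⟨Y, hY, rfl⟩; exact hY.2.2)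
  obtain ⟨_, ⟨Y, ⟨hYX, hY, hlt⟩, rfl⟩, hmax⟩ := exists_max_image _ id hfin (hS.image _)
  refine ⟨Y, hYX, hY, hlt, fun Z hYZ hZX => ?_⟩
  by_cases hZ : (colorsOn Δ Z).ncard < (colorsOn Δ X).ncard
  · exact Or.inl (eq_of_subset_of_ncard_le (colorsOn_mono hYZ)
      (hmax _ ⟨Z, ⟨hZX, hY.mono hYZ, hZ⟩, rfl⟩)).symm
  · exact Or.inr (eq_of_subset_of_ncard_le (colorsOn_mono hZX) (not_lt.1 hZ))

theorem exists_colorsOn_diff_subset_image_or_subsingleton (hsym : ∀ x y, Δ x y = Δ y x)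
    {X Y : Set ℕ} (hYX : Y ⊆ X)
    (hgap : ∀ Z, Y ⊆ Z → Z ⊆ X → colorsOn Δ Z = colorsOn Δ Y ∨ colorsOn Δ Z = colorsOn Δ X) :
    (∃ u ∈ X, colorsOn Δ X \ colorsOn Δ Y ⊆ Δ u '' (Y \ {u})) ∨
      (colorsOn Δ X \ colorsOn Δ Y).Subsingleton := by
  by_cases h : ∃ u ∈ X, colorsOn Δ (insert u Y) = colorsOn Δ X
  · obtain ⟨u, hu, huX⟩ := h
    refine Or.inl ⟨u, hu, ?_⟩
    rw [sdiff_subset_iff, ← huX, colorsOn_insert hsym]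
  simp only [not_exists, not_and] at h
  have hvertex : ∀ u ∈ X, Δ u '' (Y \ {u}) ⊆ colorsOn Δ Y := fun u hu => by
    have := (hgap _ (subset_insert u Y) (insert_subset hu hYX)).resolve_right (h u hu)
    rwa [colorsOn_insert hsym, union_eq_left] at this
  refine Or.inr ?_
  rintro _ ⟨⟨x, hx, y, hy, hxy, rfl⟩, hxyY⟩ d ⟨hdX, hdY⟩
  have hZ : colorsOn Δ (insert x (insert y Y)) = colorsOn Δ X := by
    refine (hgap _ ((subset_insert y Y).trans (subset_insert x _))
      (insert_subset hx (insert_subset hy hYX))).resolve_left fun hZY => hxyY ?_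
    rw [← hZY]
    exact ⟨x, mem_insert x _, y, mem_insert_of_mem x (mem_insert y Y), hxy, rfl⟩
  rw [← hZ, colorsOn_insert hsym, colorsOn_insert hsym] at hdX
  rcases hdX with (hd | hd) | ⟨z, ⟨rfl | hz, hzx⟩, rfl⟩
  · exact absurd hd hdY
  · exact absurd (hvertex y hy hd) hdY
  · rfl
  · exact absurd (hvertex x hx ⟨z, ⟨hz, hzx⟩, rfl⟩) hdY

theorem colorsOn_insert_union_of_forall_eq (hsym : ∀ x y, Δ x y = Δ y x) {u : ℕ}
    {Y W : Set ℕ} {a : C} (hY : Y.Nonempty) (huY : u ∉ Y) (huW : u ∉ W)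
    (ha : ∀ y ∈ Y, Δ u y = a) :
    colorsOn Δ (insert u (Y ∪ W)) = colorsOn Δ (Y ∪ W) ∪ insert a (Δ u '' W) := by
  rw [colorsOn_insert hsym, sdiff_singleton_eq_self (by simp [huY, huW]), image_union,
    image_congr ha, hY.image_const, singleton_union]

theorem exists_family_ncard_colorsOn_strictMono [Finite C] (hsym : ∀ x y, Δ x y = Δ y x)
    {X Y : Set ℕ} {u : ℕ} (hYX : Y ⊆ X) (hY : Y.Infinite) (hu : u ∈ X)
    (hL : colorsOn Δ X \ colorsOn Δ Y ⊆ Δ u '' (Y \ {u})) :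
    ∃ a : C, ∃ B : Finset C → Set ℕ,
      (∀ T T' : Finset C, ↑T' ⊆ (colorsOn Δ X \ colorsOn Δ Y) \ {a} → T ⊂ T' →
        (colorsOn Δ (B T)).ncard < (colorsOn Δ (B T')).ncard) ∧
      ∀ T : Finset C, ↑T ⊆ (colorsOn Δ X \ colorsOn Δ Y) \ {a} → B T ⊆ X ∧ (B T).Infinite ∧
        (a ∈ colorsOn Δ X \ colorsOn Δ Y → 1 < (colorsOn Δ (B T)).ncard) := by
  set L := colorsOn Δ X \ colorsOn Δ Y
  obtain ⟨a, hY₀⟩ := (hY.sdiff (finite_singleton u)).exists_infinite_inter_preimage_singleton (Δ u)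
  set Y₀ := Y \ {u} ∩ Δ u ⁻¹' {a}
  have hL' : ∀ c ∈ L, ∃ y ∈ Y \ {u}, Δ u y = c := hL
  choose! w hw hwΔ using hL'
  have hBY : ∀ T : Finset C, ↑T ⊆ L → Y₀ ∪ w '' T ⊆ Y := fun T hT =>
    union_subset (fun y hy => hy.1.1) (image_subset_iff.2 fun c hc => (hw c (hT hc)).1)
  have hB : ∀ T : Finset C, ↑T ⊆ L →
      colorsOn Δ (insert u (Y₀ ∪ w '' T)) = colorsOn Δ (Y₀ ∪ w '' T) ∪ insert a ↑T :=
    fun T hT => by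
      have hwT : Δ u '' (w '' T) = T := by
        rw [image_image, image_congr fun c hc => hwΔ c (hT hc), image_id']
      have huW : u ∉ w '' T := by
        rintro ⟨c, hc, hcu⟩
        exact (hw c (hT hc)).2 hcu
      rw [colorsOn_insert_union_of_forall_eq hsym hY₀.nonempty (fun h => h.1.2 rfl) huW
        fun y hy => hy.2, hwT]
  have hsL : ∀ T : Finset C, ↑T ⊆ L \ {a} → ↑T ⊆ L := fun T hT => hT.trans sdiff_subset
  refine ⟨a, fun T => insert u (Y₀ ∪ w '' T), fun T T' hT' hTT' => ?_, fun T hT => ?_⟩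
  · obtain ⟨c, hcT', hcT⟩ := Finset.exists_of_ssubset hTT'
    have hc : c ∈ L \ {a} := hT' hcT'
    have hT : ↑T ⊆ L \ {a} := (Finset.coe_subset.2 hTT'.subset).trans hT'
    refine ncard_lt_ncard ⟨colorsOn_mono (insert_subset_insert (union_subset_union_right _
      (image_mono (Finset.coe_subset.2 hTT'.subset)))), not_subset.2 ⟨c, ?_, ?_⟩⟩
    · rw [hB T' (hsL T' hT')]
      exact Or.inr (mem_insert_of_mem _ hcT')
    · rw [hB T (hsL T hT)]
      rintro (h | h | h)
      · exact hc.1.2 (colorsOn_mono (hBY T (hsL T hT)) h)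
      · exact hc.2 h
      · exact hcT h
  refine ⟨insert_subset hu ((hBY T (hsL T hT)).trans hYX),
    hY₀.mono fun y hy => mem_insert_of_mem u (Or.inl hy), fun haL => ?_⟩
  -- `a` is lost, whereas every colour inside `Y₀ ⊆ Y` is not
  obtain ⟨b, hb⟩ := hY₀.colorsOn_nonempty (Δ := Δ)
  have hbY : b ∈ colorsOn Δ Y := colorsOn_mono (fun y hy => hy.1.1) hb
  refine (one_lt_ncard (toFinite _)).2 ⟨a, ?_, b, ?_, fun h => haL.2 (h ▸ hbY)⟩
  · rw [hB T (hsL T hT)]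
    exact Or.inr (mem_insert a _)
  · exact colorsOn_mono (subset_union_left.trans (subset_insert _ _)) hb

theorem ncard_colorsOn_diff_lt [Finite C] (hsym : ∀ x y, Δ x y = Δ y x) {X Y : Set ℕ} {u : ℕ}
    (hYX : Y ⊆ X) (hY : Y.Infinite) (hu : u ∈ X)
    (hL : colorsOn Δ X \ colorsOn Δ Y ⊆ Δ u '' (Y \ {u})) :
    (colorsOn Δ X \ colorsOn Δ Y).ncard < (FDelta Δ ∩ Iic (colorsOn Δ X).ncard).ncard := by
  classical
  obtain ⟨a, B, hmono, hB⟩ := exists_family_ncard_colorsOn_strictMono hsym hYX hY hu hL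
  set L := colorsOn Δ X \ colorsOn Δ Y
  set s := (L \ {a}).toFinite.toFinset
  have hs : ∀ {T : Finset C}, T ⊆ s ↔ ↑T ⊆ L \ {a} := Finite.subset_toFinset
  replace hmono : StrictMonoOn (fun T => (colorsOn Δ (B T)).ncard) (Iic s) :=
    fun T _ T' hT' hTT' => hmono T T' (hs.1 hT') hTT'
  have hvalues : ∀ T ⊆ s, (colorsOn Δ (B T)).ncard ∈ FDelta Δ ∩ Iic (colorsOn Δ X).ncard :=
    fun T hT => ⟨⟨B T, (hB T (hs.1 hT)).2.1, rfl⟩,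
      ncard_le_ncard (colorsOn_mono (hB T (hs.1 hT)).1)⟩
  have hfin : (FDelta Δ ∩ Iic (colorsOn Δ X).ncard).Finite :=
    (finite_Iic _).subset inter_subset_right
  by_cases haL : a ∈ L
  -- the chain then has one value fewer than `L` has colours, but all its values exceed `1`
  · have hcard : s.card + 1 = L.ncard := by
      rw [← ncard_eq_toFinset_card _ (toFinite _)]
      exact ncard_sdiff_singleton_add_one haL
    have h1 : 1 ∈ FDelta Δ ∩ Iic (colorsOn Δ X).ncard :=
      ⟨one_mem_FDelta hsym, (ncard_pos (toFinite _)).2 ⟨a, haL.1⟩⟩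
    have := Finset.card_lt_ncard_of_strictMonoOn hmono (hfin.sdiff (t := {1}))
      fun T hT => ⟨hvalues T hT, fun h => ((hB T (hs.1 hT)).2.2 haL).ne' h⟩
    rw [← ncard_sdiff_singleton_add_one h1 hfin]
    omega
  · rw [← sdiff_singleton_eq_self haL, ncard_eq_toFinset_card _ (toFinite _)]
    exact Finset.card_lt_ncard_of_strictMonoOn hmono hfin hvalues

theorem exists_lt_lt_add_ncard_FDelta [Finite C] (hsym : ∀ x y, Δ x y = Δ y x) {k : ℕ}
    (hk : k ∈ FDelta Δ) (hk2 : 2 ≤ k) :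
    ∃ k' ∈ FDelta Δ, k' < k ∧ k < k' + (FDelta Δ ∩ Iic k).ncard := by
  obtain ⟨X, hX, rfl⟩ := hk
  obtain ⟨Y, hYX, hY, hlt, hgap⟩ := exists_subset_colorsOn_eq_or_eq hsym hX hk2
  refine ⟨_, ⟨Y, hY, rfl⟩, hlt, ?_⟩
  have hsplit := ncard_sdiff_add_ncard_of_subset (colorsOn_mono (Δ := Δ) hYX) (toFinite _)
  rcases exists_colorsOn_diff_subset_image_or_subsingleton hsym hYX hgap with ⟨u, hu, hL⟩ | hL
  · have := ncard_colorsOn_diff_lt hsym hYX hY hu hL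
    omega
  · have hL1 := ncard_le_one_iff_subsingleton.2 hL
    have h2 : 1 < (FDelta Δ ∩ Iic (colorsOn Δ X).ncard).ncard :=
      (one_lt_ncard ((finite_Iic _).subset inter_subset_right)).2
        ⟨1, ⟨one_mem_FDelta hsym, mem_Iic.2 (by omega)⟩, _, ⟨⟨X, hX, rfl⟩, self_mem_Iic⟩, by omega⟩
    omega

end Colourings

theorem stmt5_general {m : ℕ} (Δ : ℕ → ℕ → Fin m)
    (hsym : ∀ x y, Δ x y = Δ y x)
    (hsurj : ∀ c : Fin m, ∃ x y : ℕ, x ≠ y ∧ Δ x y = c) :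
    Nat.sqrt (2 * m) ≤ (FDelta Δ).ncard := by
  have hmF : m ∈ FDelta Δ := by
    have huniv : colorsOn Δ univ = univ := eq_univ_of_forall fun c => by
      obtain ⟨x, y, hxy, rfl⟩ := hsurj c
      exact ⟨x, trivial, y, trivial, hxy, rfl⟩
    exact ⟨univ, infinite_univ, by simp [huniv]⟩
  have hF : FDelta Δ ∩ Iic m = FDelta Δ := inter_eq_left.2 fun k ⟨X, _, hk⟩ =>
    hk ▸ (ncard_le_card _).trans_eq (Nat.card_eq_fintype_card.trans (Fintype.card_fin m))
  have hbound := le_choose_ncard_inter_Iic_add_one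
    (fun k hk hk2 => exists_lt_lt_add_ncard_FDelta hsym hk hk2) m hmF
  have hpos : 0 < (FDelta Δ).ncard :=
    (ncard_pos (hF ▸ (finite_Iic m).inter_of_right _)).2 ⟨m, hmF⟩
  rw [hF] at hbound
  have hchoose : 2 * (FDelta Δ).ncard.choose 2 ≤ (FDelta Δ).ncard * (FDelta Δ).ncard := by
    rw [Nat.choose_two_right]
    exact (Nat.mul_div_le _ 2).trans (Nat.mul_le_mul_left _ (Nat.sub_le _ 1))
  exact Nat.lt_succ_iff.1 (Nat.sqrt_lt.2 (by nlinarith))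

/-- For every `m ≥ 2` and every surjective `m`-colouring `Δ` of `ℕ^(2)`,
`F_Δ` has at least `⌊√(2m)⌋` elements. -/
theorem stmt5 {m : ℕ} (hm : 2 ≤ m) (Δ : ℕ → ℕ → Fin m)
    (hsym : ∀ x y, Δ x y = Δ y x)
    (hsurj : ∀ c : Fin m, ∃ x y : ℕ, x ≠ y ∧ Δ x y = c) :
    Nat.sqrt (2 * m) ≤ (FDelta Δ).ncard :=
  stmt5_general Δ hsym hsurj
end

section
/- For every n ≥ 2 there exists a surjective colouring Δ : ℕ^(2) → [binom(n,2)+1] such that F_Δ = { binom(t,2)+1 : 1 ≤ t ≤ n }; in particular |F_Δ| = n. -/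
open Finset Classical

lemma choose2_succ (b : ℕ) : (b+1).choose 2 = b.choose 2 + b := by
  rw [Nat.choose_succ_succ]; simp [Nat.choose_one_right]; omega

lemma code_lt {a b n : ℕ} (hab : a < b) (hbn : b < n) : b.choose 2 + a < n.choose 2 := by
  have h1 : b.choose 2 + a < (b+1).choose 2 := by rw [choose2_succ]; omega
  have h2 : (b+1).choose 2 ≤ n.choose 2 := Nat.choose_le_choose 2 hbn
  omega

lemma code_inj {a b a' b' : ℕ} (hab : a < b) (hab' : a' < b')
    (h : b.choose 2 + a = b'.choose 2 + a') : a = a' ∧ b = b' := by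
  have hb : b = b' := by
    by_contra hne
    rcases Nat.lt_or_ge b b' with hlt | hge
    · have := Nat.choose_le_choose 2 hlt
      rw [choose2_succ] at this; omega
    · have hlt : b' < b := by omega
      have := Nat.choose_le_choose 2 hlt
      rw [choose2_succ] at this; omega
  subst hb; omega

lemma code_surj {n c : ℕ} (hc : c < n.choose 2) :
    ∃ a b, a < b ∧ b < n ∧ b.choose 2 + a = c := by
  induction n with
  | zero => simp at hc
  | succ m ih =>
    rcases Nat.lt_or_ge c (m.choose 2) with h | h
    · obtain ⟨a, b, h1, h2, h3⟩ := ih h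
      exact ⟨a, b, h1, by omega, h3⟩
    · refine ⟨c - m.choose 2, m, ?_, by omega, by omega⟩
      rw [choose2_succ] at hc; omega

lemma card_ltPairs (s : Finset ℕ) :
    ((s ×ˢ s).filter fun p => p.1 < p.2).card = s.card.choose 2 := by
  rw [← Finset.card_powersetCard 2 s]
  apply Finset.card_bij (fun p _ => ({p.1, p.2} : Finset ℕ))
  · rintro ⟨a, b⟩ hp
    simp only [Finset.mem_filter, Finset.mem_product] at hp
    rw [Finset.mem_powersetCard]
    refine ⟨?_, Finset.card_pair (by omega)⟩
    intro x hx
    simp only [Finset.mem_insert, Finset.mem_singleton] at hx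
    rcases hx with rfl | rfl
    · exact hp.1.1
    · exact hp.1.2
  · rintro ⟨a, b⟩ hp ⟨a', b'⟩ hp' h
    simp only [Finset.mem_filter, Finset.mem_product] at hp hp'
    have ha : a ∈ ({a', b'} : Finset ℕ) := by rw [← h]; simp
    have hb : b ∈ ({a', b'} : Finset ℕ) := by rw [← h]; simp
    have ha' : a' ∈ ({a, b} : Finset ℕ) := by rw [h]; simp
    have hb' : b' ∈ ({a, b} : Finset ℕ) := by rw [h]; simp
    simp only [Finset.mem_insert, Finset.mem_singleton] at ha hb ha' hb'
    have := hp.2; have := hp'.2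
    simp only [Prod.mk.injEq]
    omega
  · intro t ht
    rw [Finset.mem_powersetCard] at ht
    obtain ⟨x, y, hxy, rfl⟩ := Finset.card_eq_two.1 ht.2
    rcases Nat.lt_or_ge x y with h | h
    · refine ⟨(x, y), ?_, rfl⟩
      simp only [Finset.mem_filter, Finset.mem_product]
      exact ⟨⟨ht.1 (by simp), ht.1 (by simp)⟩, h⟩
    · refine ⟨(y, x), ?_, by rw [Finset.pair_comm]⟩
      simp only [Finset.mem_filter, Finset.mem_product]
      exact ⟨⟨ht.1 (by simp), ht.1 (by simp)⟩, by omega⟩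

noncomputable def Nval (n x y : ℕ) : ℕ :=
  if x < n ∧ y < n ∧ x ≠ y then (max x y).choose 2 + min x y else n.choose 2

lemma Nval_lt (n x y : ℕ) : Nval n x y < n.choose 2 + 1 := by
  unfold Nval; split
  · next h =>
    have : min x y < max x y := by omega
    have : max x y < n := by omega
    have := code_lt ‹min x y < max x y› ‹max x y < n›
    omega
  · omega

noncomputable def Dlt (n : ℕ) (x y : ℕ) : Fin (n.choose 2 + 1) := ⟨Nval n x y, Nval_lt n x y⟩

lemma Dlt_symm (n x y : ℕ) : Dlt n x y = Dlt n y x := by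
  unfold Dlt Nval
  congr 1
  split_ifs with h1 h2 h2
  · rw [max_comm, min_comm]
  · exact absurd ⟨h1.2.1, h1.1, h1.2.2.symm⟩ h2
  · exact absurd ⟨h2.2.1, h2.1, h2.2.2.symm⟩ h1
  · rfl

lemma Dlt_last {n x y : ℕ} (h : ¬(x < n ∧ y < n ∧ x ≠ y)) : Dlt n x y = Fin.last _ := by
  unfold Dlt Nval; simp [h]; rfl

/-- the finite trace of `X` inside `[0,n)` -/
noncomputable def trace (n : ℕ) (X : Set ℕ) : Finset ℕ := (Finset.range n).filter (· ∈ X)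

lemma colorsOn_eq (n : ℕ) (X : Set ℕ) (hX : X.Infinite) :
    colorsOn (Dlt n) X =
      ↑((((trace n X) ×ˢ (trace n X)).filter fun p => p.1 < p.2).image
          (fun p => Dlt n p.1 p.2)) ∪ {Fin.last _} := by
  ext c
  constructor
  · rintro ⟨x, hx, y, hy, hxy, rfl⟩
    by_cases h : x < n ∧ y < n
    · left
      simp only [Finset.coe_image, Set.mem_image, Finset.mem_coe, Finset.mem_filter,
        Finset.mem_product]
      refine ⟨(min x y, max x y), ⟨⟨?_, ?_⟩, by omega⟩, ?_⟩
      · simp only [trace, Finset.mem_filter, Finset.mem_range]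
        rcases min_choice x y with h' | h' <;> rw [h'] <;> simp_all
      · simp only [trace, Finset.mem_filter, Finset.mem_range]
        rcases max_choice x y with h' | h' <;> rw [h'] <;> simp_all
      · rcases le_total x y with h' | h'
        · rw [min_eq_left h', max_eq_right h']
        · rw [min_eq_right h', max_eq_left h']
          exact (Dlt_symm n x y).symm
    · right
      rw [Dlt_last (by tauto)]; rfl
  · rintro (hc | hc)
    · simp only [Finset.coe_image, Set.mem_image, Finset.mem_coe, Finset.mem_filter,
        Finset.mem_product, trace, Finset.mem_range] at hc
      obtain ⟨⟨a, b⟩, ⟨⟨⟨ha, haX⟩, hb, hbX⟩, hab⟩, rfl⟩ := hc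
      exact ⟨a, haX, b, hbX, by omega, rfl⟩
    · obtain rfl : c = Fin.last _ := hc
      have h1 : (X \ Set.Iio n).Infinite := hX.diff (Set.finite_Iio n)
      obtain ⟨x, hx⟩ := h1.nonempty
      have h2 : ((X \ Set.Iio n) \ {x}).Infinite := h1.diff (Set.finite_singleton x)
      obtain ⟨y, hy⟩ := h2.nonempty
      refine ⟨x, hx.1, y, hy.1.1, ?_, ?_⟩
      · intro h; exact hy.2 (by simp [h])
      · apply Dlt_last
        have : ¬ x < n := by simpa using hx.2
        tauto

lemma gammaX (n : ℕ) (X : Set ℕ) (hX : X.Infinite) :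
    (colorsOn (Dlt n) X).ncard = (trace n X).card.choose 2 + 1 := by
  classical
  rw [colorsOn_eq n X hX]
  set P := ((trace n X) ×ˢ (trace n X)).filter fun p => p.1 < p.2 with hP
  have hsub : ∀ p ∈ P, p.1 < n ∧ p.2 < n ∧ p.1 < p.2 := by
    rintro ⟨a, b⟩ hp
    simp only [hP, Finset.mem_filter, Finset.mem_product, trace, Finset.mem_range] at hp
    exact ⟨hp.1.1.1, hp.1.2.1, hp.2⟩
  have hval : ∀ p ∈ P, (Dlt n p.1 p.2).val = p.2.choose 2 + p.1 := by
    intro p hp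
    obtain ⟨h1, h2, h3⟩ := hsub p hp
    have hc : p.1 < n ∧ p.2 < n ∧ p.1 ≠ p.2 := ⟨h1, h2, by omega⟩
    show Nval n p.1 p.2 = _
    unfold Nval
    rw [if_pos hc, max_eq_right (le_of_lt h3), min_eq_left (le_of_lt h3)]
  have hlast : Fin.last (n.choose 2) ∉ P.image (fun p => Dlt n p.1 p.2) := by
    intro h
    rw [Finset.mem_image] at h
    obtain ⟨p, hp, hpe⟩ := h
    obtain ⟨h1, h2, h3⟩ := hsub p hp
    have := hval p hp
    have h4 := code_lt h3 h2
    have : (Fin.last (n.choose 2)).val = n.choose 2 := rfl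
    omega
  have : (↑(P.image (fun p => Dlt n p.1 p.2)) ∪ {Fin.last (n.choose 2)} :
      Set (Fin (n.choose 2 + 1))) = ↑(insert (Fin.last (n.choose 2)) (P.image (fun p => Dlt n p.1 p.2))) := by
    rw [Finset.coe_insert]
    rw [Set.union_comm, Set.singleton_union]
  rw [this, Set.ncard_coe_finset, Finset.card_insert_of_notMem hlast]
  rw [Finset.card_image_of_injOn, hP, card_ltPairs]
  intro p hp q hq h
  replace hp := Finset.mem_coe.mp hp
  replace hq := Finset.mem_coe.mp hq
  obtain ⟨h1, h2, h3⟩ := hsub p hp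
  obtain ⟨h1', h2', h3'⟩ := hsub q hq
  have heq : p.2.choose 2 + p.1 = q.2.choose 2 + q.1 := by
    rw [← hval p hp, ← hval q hq]
    exact congrArg Fin.val h
  obtain ⟨e1, e2⟩ := code_inj h3 h3' heq
  exact Prod.ext e1 e2

/-- For every `n ≥ 2` there is a surjective colouring with `binom(n,2)+1` colours
whose `F_Δ` is exactly `{ binom(t,2)+1 : 1 ≤ t ≤ n }`, of size `n`. -/
theorem stmt7 {n : ℕ} (hn : 2 ≤ n) :
    ∃ Δ : ℕ → ℕ → Fin (n.choose 2 + 1),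
      (∀ x y, Δ x y = Δ y x) ∧
      (∀ c : Fin (n.choose 2 + 1), ∃ x y : ℕ, x ≠ y ∧ Δ x y = c) ∧
      FDelta Δ = {k | ∃ t : ℕ, 1 ≤ t ∧ t ≤ n ∧ k = t.choose 2 + 1} ∧
      (FDelta Δ).ncard = n := by
  have hFD : FDelta (Dlt n) = {k | ∃ t : ℕ, 1 ≤ t ∧ t ≤ n ∧ k = t.choose 2 + 1} := by
    ext k
    simp only [FDelta, Set.mem_setOf_eq]
    constructor
    · rintro ⟨X, hX, rfl⟩
      rw [gammaX n X hX]
      set m := (trace n X).card with hm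
      have hmn : m ≤ n := by
        calc m ≤ (Finset.range n).card := Finset.card_filter_le _ _
        _ = n := Finset.card_range n
      refine ⟨max m 1, le_max_right _ _, by omega, ?_⟩
      rcases Nat.eq_zero_or_pos m with h0 | h0
      · rw [h0]; norm_num
      · rw [max_eq_left h0]
    · rintro ⟨t, ht1, ht2, rfl⟩
      have hinf : (Set.Iio t ∪ Set.Ici n).Infinite :=
        (Set.Ici_infinite n).mono Set.subset_union_right
      refine ⟨_, hinf, ?_⟩
      rw [gammaX n _ hinf]
      have htr : trace n (Set.Iio t ∪ Set.Ici n) = Finset.range t := by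
        ext x
        simp only [trace, Finset.mem_filter, Finset.mem_range, Set.mem_union, Set.mem_Iio,
          Set.mem_Ici]
        omega
      rw [htr, Finset.card_range]
  refine ⟨Dlt n, Dlt_symm n, ?_, hFD, ?_⟩
  · intro c
    rcases Nat.lt_or_ge c.val (n.choose 2) with h | h
    · obtain ⟨a, b, h1, h2, h3⟩ := code_surj h
      refine ⟨a, b, by omega, ?_⟩
      apply Fin.ext
      show Nval n a b = c.val
      unfold Nval
      rw [if_pos ⟨by omega, h2, by omega⟩, max_eq_right h1.le, min_eq_left h1.le]
      exact h3
    · have hc : c.val = n.choose 2 := by omega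
      refine ⟨n, n + 1, by omega, ?_⟩
      rw [Dlt_last (by omega)]
      exact (Fin.ext hc.symm : Fin.last _ = c)
  · rw [hFD]
    have himg : {k | ∃ t : ℕ, 1 ≤ t ∧ t ≤ n ∧ k = t.choose 2 + 1} =
        (fun t => t.choose 2 + 1) '' Set.Icc 1 n := by
      ext k
      simp only [Set.mem_setOf_eq, Set.mem_image, Set.mem_Icc]
      constructor
      · rintro ⟨t, h1, h2, rfl⟩; exact ⟨t, ⟨h1, h2⟩, rfl⟩
      · rintro ⟨t, ⟨h1, h2⟩, rfl⟩; exact ⟨t, h1, h2, rfl⟩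
    rw [himg, Set.ncard_image_of_injOn, ← Finset.coe_Icc, Set.ncard_coe_finset,
      Nat.card_Icc]
    · omega
    · intro a ha b hb h
      simp only [Set.mem_Icc] at ha hb
      simp only at h
      by_contra hne
      rcases Nat.lt_or_ge a b with hlt | hge
      · have := Nat.choose_le_choose 2 (show a + 1 ≤ b by omega)
        rw [choose2_succ] at this; omega
      · have hlt : b < a := by omega
        have := Nat.choose_le_choose 2 (show b + 1 ≤ a by omega)
        rw [choose2_succ] at this; omega
end

section
/- Let Δ' be an edge-colouring of the complete graph K_{n+1} (n ≥ 2) using exactly m colours, and suppose that for every vertex v and every j ∈ [n+1], the number of colours appearing on edges within the first j vertices (under a greedy ordering as constructed) is counted by c(j), the number of new colours contributed by the j-th added set. Then under the conclusions of the greedy set-sequence lemma, for every j, the sum c(1)+…+c(j) ≤ binom(j,2)+1. -/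
/-- The finite set of colours appearing on edges inside the finite vertex set `S`. -/
def edgeCols {V : Type*} [DecidableEq V] (Δ' : V → V → ℕ) (S : Finset V) : Finset ℕ :=
  ((S ×ˢ S).filter fun p => p.1 ≠ p.2).image fun p => Δ' p.1 p.2

/-- The colours spanned by `S` in a special colouring: the edge colours inside
`S`, together with the colour `cx` of the special vertex `x'` when `x' ∈ S`. -/
def spanCols {V : Type*} [DecidableEq V] (Δ' : V → V → ℕ) (x' : V) (cx : ℕ)
    (S : Finset V) : Finset ℕ :=
  (if x' ∈ S then ({cx} : Finset ℕ) else ∅) ∪ edgeCols Δ' S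

/-- Colours on edges from a vertex `v` to a set `S`. -/
def bipCols {V : Type*} [DecidableEq V] (Δ' : V → V → ℕ) (v : V) (S : Finset V) :
    Finset ℕ :=
  S.image (Δ' v)

lemma edgeCols_mono {V : Type*} [DecidableEq V] (Δ' : V → V → ℕ) {S T : Finset V}
    (h : S ⊆ T) : edgeCols Δ' S ⊆ edgeCols Δ' T := by
  intro col hcol
  simp only [edgeCols, Finset.mem_image, Finset.mem_filter, Finset.mem_product] at hcol ⊢
  obtain ⟨p, ⟨⟨h1, h2⟩, hne⟩, rfl⟩ := hcol
  exact ⟨p, ⟨⟨h h1, h h2⟩, hne⟩, rfl⟩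

lemma spanCols_mono {V : Type*} [DecidableEq V] (Δ' : V → V → ℕ) (x' : V) (cx : ℕ)
    {S T : Finset V} (h : S ⊆ T) : spanCols Δ' x' cx S ⊆ spanCols Δ' x' cx T := by
  unfold spanCols
  apply Finset.union_subset_union _ (edgeCols_mono Δ' h)
  by_cases hx : x' ∈ S
  · rw [if_pos hx, if_pos (h hx)]
  · rw [if_neg hx]; exact Finset.empty_subset _

lemma edgeCols_singleton {V : Type*} [DecidableEq V] (Δ' : V → V → ℕ) (v : V) :
    edgeCols Δ' {v} = ∅ := by
  simp [edgeCols, Finset.filter_eq_empty_iff]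

lemma edgeCols_pair {V : Type*} [DecidableEq V] (Δ' : V → V → ℕ)
    (hsym : ∀ x y, Δ' x y = Δ' y x) (a b : V) :
    edgeCols Δ' {a, b} ⊆ {Δ' a b} := by
  intro col hcol
  simp only [edgeCols, Finset.mem_image, Finset.mem_filter, Finset.mem_product,
    Finset.mem_insert, Finset.mem_singleton] at hcol ⊢
  obtain ⟨p, ⟨⟨h1, h2⟩, hne⟩, rfl⟩ := hcol
  rcases h1 with h1 | h1 <;> rcases h2 with h2 | h2 <;> rw [h1, h2]
  · exact absurd (h1.trans h2.symm) hne
  · exact hsym b a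
  · exact absurd (h1.trans h2.symm) hne

/-- Given a sequence `A 1, …, A ℓ` of pairwise disjoint sets of size `1` or `2`
as provided by the greedy set-sequence lemma (with `A 1 = {x'}`, strictly
increasing colour counts, all `m` colours at the end, property (4) on sets of
size two, and the maximality property (5)), the number `c j` of new colours
contributed at step `j` satisfies `c(1)+⋯+c(j) ≤ binom(j,2)+1` for every `j`. -/
theorem stmt12 {n m ℓ : ℕ} (hn : 2 ≤ n)
    (x' : Fin (n + 1)) (cx : ℕ)
    (Δ' : Fin (n + 1) → Fin (n + 1) → ℕ) (hsym : ∀ x y, Δ' x y = Δ' y x)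
    (A : ℕ → Finset (Fin (n + 1)))
    (U : ℕ → Finset (Fin (n + 1))) (hU : ∀ j, U j = (Finset.Icc 1 j).biUnion A)
    (c : ℕ → ℕ)
    (hc : ∀ j, c j =
      ((spanCols Δ' x' cx (U j)) \ (spanCols Δ' x' cx (U (j - 1)))).card)
    (hdisj : ∀ i j, 1 ≤ i → i < j → j ≤ ℓ → Disjoint (A i) (A j))
    (hA1 : A 1 = {x'})
    (hsize : ∀ i, 1 ≤ i → i ≤ ℓ → (A i).card = 1 ∨ (A i).card = 2)
    (hmono : ∀ i j, 1 ≤ i → i < j → j ≤ ℓ →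
      (spanCols Δ' x' cx (U i)).card < (spanCols Δ' x' cx (U j)).card)
    (htotal : (spanCols Δ' x' cx (U ℓ)).card = m)
    (h4 : ∀ j, 1 ≤ j → j ≤ ℓ → (A j).card = 2 →
      ∀ t, j ≤ t → t ≤ ℓ → ∀ v ∈ A t,
        bipCols Δ' v (U (j - 1)) ⊆ spanCols Δ' x' cx (U (j - 1)))
    (h5 : ∀ i j, 1 ≤ i → i < j → j ≤ ℓ → ∀ v ∈ A i, ∀ w ∈ A j,
      ((bipCols Δ' w (U (i - 1))) \ (spanCols Δ' x' cx (U (i - 1)))).card ≤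
        ((bipCols Δ' v (U (i - 1))) \ (spanCols Δ' x' cx (U (i - 1)))).card) :
    ∀ j, 1 ≤ j → j ≤ ℓ → ∑ i ∈ Finset.Icc 1 j, c i ≤ j.choose 2 + 1 := by
  -- abbreviation
  set sp : Finset (Fin (n+1)) → Finset ℕ := spanCols Δ' x' cx with hsp
  -- basic facts about U
  have hU0 : U 0 = ∅ := by rw [hU]; simp
  have hUstep : ∀ i : ℕ, 1 ≤ i → U i = U (i-1) ∪ A i := by
    intro i hi
    rw [hU, hU]
    have : Finset.Icc 1 i = insert i (Finset.Icc 1 (i-1)) := by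
      ext t; simp only [Finset.mem_Icc, Finset.mem_insert]; omega
    rw [this, Finset.biUnion_insert, Finset.union_comm]
  have hUmono : ∀ i j : ℕ, i ≤ j → U i ⊆ U j := by
    intro i j hij
    rw [hU, hU]
    apply Finset.biUnion_subset_biUnion_of_subset_left
    exact Finset.Icc_subset_Icc_right hij
  have hsp0 : sp (U 0) = ∅ := by
    rw [hU0, hsp]
    simp [spanCols, edgeCols]
  have hU1 : U 1 = {x'} := by
    rw [hU]; simp [hA1]
  -- c 1 = 1
  have hc1 : c 1 = 1 := by
    rw [hc, hsp0, Finset.sdiff_empty, hU1, hsp]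
    simp [spanCols, edgeCols_singleton]
  -- key bipartite bound
  have hkey : ∀ i, 2 ≤ i → i ≤ ℓ → ∀ v ∈ A i, ∀ k, k ≤ i - 1 →
      (bipCols Δ' v (U k) \ sp (U (i-1))).card ≤ k := by
    intro i hi2 hil v hv k
    induction k with
    | zero => intro _; simp [hU0, bipCols]
    | succ k ih =>
      intro hk
      have ihk := ih (by omega)
      have hUs : U (k+1) = U k ∪ A (k+1) := by
        have := hUstep (k+1) (by omega); simpa using this
      have hsubun : bipCols Δ' v (U (k+1)) \ sp (U (i-1)) ⊆
          (bipCols Δ' v (U k) \ sp (U (i-1))) ∪ (bipCols Δ' v (A (k+1)) \ sp (U (i-1))) := by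
        rw [hUs]
        simp only [bipCols, Finset.image_union]
        rw [Finset.union_sdiff_distrib]
      have hcard : (bipCols Δ' v (U (k+1)) \ sp (U (i-1))).card ≤
          (bipCols Δ' v (U k) \ sp (U (i-1))).card +
          (bipCols Δ' v (A (k+1)) \ sp (U (i-1))).card :=
        le_trans (Finset.card_le_card hsubun) (Finset.card_union_le _ _)
      rcases hsize (k+1) (by omega) (by omega) with h1 | h2
      · -- size 1
        have : (bipCols Δ' v (A (k+1)) \ sp (U (i-1))).card ≤ 1 := by
          calc (bipCols Δ' v (A (k+1)) \ sp (U (i-1))).card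
              ≤ (bipCols Δ' v (A (k+1))).card := Finset.card_le_card (Finset.sdiff_subset)
            _ ≤ (A (k+1)).card := Finset.card_image_le
            _ = 1 := h1
        omega
      · -- size 2: then k+1 ≥ 2 since A 1 = {x'}
        have hk1 : 1 ≤ k := by
          by_contra h
          have : k = 0 := by omega
          rw [this] at h2
          rw [hA1] at h2
          simp at h2
        have hemp : bipCols Δ' v (U k) \ sp (U (i-1)) = ∅ := by
          apply Finset.sdiff_eq_empty_iff_subset.2
          have h4' := h4 (k+1) (by omega) (by omega) h2 i (by omega) hil v hv
          simp only [Nat.add_sub_cancel] at h4'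
          exact h4'.trans (spanCols_mono Δ' x' cx (hUmono k (i-1) (by omega)))
        have : (bipCols Δ' v (A (k+1)) \ sp (U (i-1))).card ≤ 2 := by
          calc (bipCols Δ' v (A (k+1)) \ sp (U (i-1))).card
              ≤ (bipCols Δ' v (A (k+1))).card := Finset.card_le_card (Finset.sdiff_subset)
            _ ≤ (A (k+1)).card := Finset.card_image_le
            _ = 2 := h2
        rw [hemp] at hcard
        simp at hcard
        omega
  -- the inclusion at step i
  have hincl : ∀ i, 2 ≤ i → sp (U i) \ sp (U (i-1)) ⊆
      edgeCols Δ' (A i) ∪ (A i).biUnion (fun v => bipCols Δ' v (U (i-1)) \ sp (U (i-1))) := by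
    intro i hi2 col hcol
    rw [Finset.mem_sdiff] at hcol
    obtain ⟨hin, hout⟩ := hcol
    have hxU : x' ∈ U (i-1) := by
      have : x' ∈ U 1 := by rw [hU1]; exact Finset.mem_singleton_self x'
      exact hUmono 1 (i-1) (by omega) this
    rw [hsp] at hin
    unfold spanCols at hin
    rcases Finset.mem_union.1 hin with hcx | hedge
    · -- col = cx, contradiction
      exfalso
      apply hout
      rw [hsp]
      unfold spanCols
      apply Finset.mem_union_left
      rw [if_pos hxU]
      split at hcx
      · exact hcx
      · simp at hcx
    · -- edge colour
      simp only [edgeCols, Finset.mem_image, Finset.mem_filter, Finset.mem_product] at hedge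
      obtain ⟨p, ⟨⟨ha, hb⟩, hne⟩, rfl⟩ := hedge
      have hUi : U i = U (i-1) ∪ A i := hUstep i (by omega)
      rw [hUi, Finset.mem_union] at ha hb
      have hspU : sp (U (i-1)) = spanCols Δ' x' cx (U (i-1)) := rfl
      rcases ha with ha | ha <;> rcases hb with hb | hb
      · exfalso
        apply hout
        rw [hsp]
        unfold spanCols
        apply Finset.mem_union_right
        simp only [edgeCols, Finset.mem_image, Finset.mem_filter, Finset.mem_product]
        exact ⟨p, ⟨⟨ha, hb⟩, hne⟩, rfl⟩
      · -- p.1 ∈ U(i-1), p.2 ∈ A i : colour = Δ' p.2 p.1 ∈ bipCols p.2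
        apply Finset.mem_union_right
        rw [Finset.mem_biUnion]
        refine ⟨p.2, hb, ?_⟩
        rw [Finset.mem_sdiff]
        refine ⟨?_, hout⟩
        simp only [bipCols, Finset.mem_image]
        exact ⟨p.1, ha, (hsym p.2 p.1)⟩
      · apply Finset.mem_union_right
        rw [Finset.mem_biUnion]
        refine ⟨p.1, ha, ?_⟩
        rw [Finset.mem_sdiff]
        refine ⟨?_, hout⟩
        simp only [bipCols, Finset.mem_image]
        exact ⟨p.2, hb, rfl⟩
      · exact Finset.mem_union_left _ (by
          simp only [edgeCols, Finset.mem_image, Finset.mem_filter, Finset.mem_product]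
          exact ⟨p, ⟨⟨ha, hb⟩, hne⟩, rfl⟩)
  -- c i ≤ i - 1 for 2 ≤ i ≤ ℓ
  have hci : ∀ i, 2 ≤ i → i ≤ ℓ → c i ≤ i - 1 := by
    intro i hi2 hil
    have hcle : c i ≤ (edgeCols Δ' (A i)).card +
        ∑ v ∈ A i, (bipCols Δ' v (U (i-1)) \ sp (U (i-1))).card := by
      rw [hc]
      calc ((spanCols Δ' x' cx (U i)) \ (spanCols Δ' x' cx (U (i-1)))).card
          ≤ (edgeCols Δ' (A i) ∪
              (A i).biUnion (fun v => bipCols Δ' v (U (i-1)) \ sp (U (i-1)))).card :=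
            Finset.card_le_card (hincl i hi2)
        _ ≤ (edgeCols Δ' (A i)).card +
              ((A i).biUnion (fun v => bipCols Δ' v (U (i-1)) \ sp (U (i-1)))).card :=
            Finset.card_union_le _ _
        _ ≤ _ := by
            gcongr
            exact Finset.card_biUnion_le
    rcases hsize i (by omega) hil with h1 | h2
    · -- size 1
      obtain ⟨v, hv⟩ := Finset.card_eq_one.1 h1
      have hvmem : v ∈ A i := by rw [hv]; exact Finset.mem_singleton_self v
      have hbnd := hkey i hi2 hil v hvmem (i-1) le_rfl
      rw [hv] at hcle
      rw [edgeCols_singleton, Finset.sum_singleton] at hcle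
      simp at hcle
      omega
    · -- size 2
      obtain ⟨a, b, hab, hA⟩ := Finset.card_eq_two.1 h2
      have hbip : ∀ v ∈ A i, bipCols Δ' v (U (i-1)) \ sp (U (i-1)) = ∅ := by
        intro v hv
        apply Finset.sdiff_eq_empty_iff_subset.2
        exact h4 i (by omega) hil h2 i le_rfl hil v hv
      have hsum : ∑ v ∈ A i, (bipCols Δ' v (U (i-1)) \ sp (U (i-1))).card = 0 := by
        apply Finset.sum_eq_zero
        intro v hv
        rw [hbip v hv]
        rfl
      rw [hsum] at hcle
      have hedge : (edgeCols Δ' (A i)).card ≤ 1 := by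
        rw [hA]
        calc (edgeCols Δ' {a, b}).card ≤ ({Δ' a b} : Finset ℕ).card :=
              Finset.card_le_card (edgeCols_pair Δ' hsym a b)
          _ = 1 := Finset.card_singleton _
      omega
  -- conclude by induction
  intro j
  induction j with
  | zero => intro h; omega
  | succ j ih =>
    intro _ hjl
    by_cases hj : j = 0
    · subst hj
      simp only [Finset.Icc_self, Finset.sum_singleton]
      rw [hc1]
      simp
    · have hj1 : 1 ≤ j := by omega
      have hIcc : Finset.Icc 1 (j+1) = insert (j+1) (Finset.Icc 1 j) := by
        ext t; simp only [Finset.mem_Icc, Finset.mem_insert]; omega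
      rw [hIcc, Finset.sum_insert (by simp)]
      have h1 := ih hj1 (by omega)
      have h2 := hci (j+1) (by omega) hjl
      have hch : (j+1).choose 2 = j.choose 2 + j := by
        rw [show (j+1).choose 2 = j.choose 1 + j.choose 2 from Nat.choose_succ_succ j 1,
          Nat.choose_one_right]
        omega
      omega
end
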